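/- Every n×n matrix with nonnegative integer entries whose row sums and column sums all equal k can be written as a sum of k permutation matrices (Birkhoff–von Neumann for integer doubly stochastic matrices). -/

import Mathlib

/-!
Hall's theorem applied to the support of `M` yields a permutation `σ` with `M i (σ i) ≠ 0` for
all `i`: a set `s` of rows carries total mass `k * #s`, and all of it lies in the columns that
meet the support of `s`, each of which carries mass `k`. Subtracting the permutation matrix of `σ`
leaves a matrix whose line sums all equal `k - 1`, so induction on `k` finishes.
-/

open Finset Equiv

namespace Matrix

lemma card_le_card_biUnion_support {m n : Type*} [Fintype m] [Fintype n] [DecidableEq n]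
    {M : Matrix m n ℕ} {k : ℕ} (hk : 0 < k) (hrow : ∀ i, ∑ j, M i j = k)
    (hcol : ∀ j, ∑ i, M i j ≤ k) (s : Finset m) :
    #s ≤ #(s.biUnion fun i => {j | M i j ≠ 0}) := by
  set T := s.biUnion fun i => {j | M i j ≠ 0}
  refine Nat.le_of_mul_le_mul_left ?_ hk
  calc k * #s = ∑ i ∈ s, ∑ j, M i j := by simp [hrow, mul_comm]
    _ = ∑ i ∈ s, ∑ j ∈ T, M i j := by
        refine sum_congr rfl fun i hi => (sum_subset (subset_univ T) fun j _ hj => ?_).symm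
        by_contra hij
        exact hj (mem_biUnion.mpr ⟨i, hi, by simpa using hij⟩)
    _ = ∑ j ∈ T, ∑ i ∈ s, M i j := sum_comm
    _ ≤ ∑ j ∈ T, ∑ i, M i j := by gcongr; exact subset_univ s
    _ ≤ k * #T := by simpa [mul_comm] using sum_le_sum fun j (_ : j ∈ T) => hcol j

variable {ι : Type*} [Fintype ι] [DecidableEq ι]

lemma exists_perm_forall_ne_zero {M : Matrix ι ι ℕ} {k : ℕ} (hk : 0 < k)
    (hrow : ∀ i, ∑ j, M i j = k) (hcol : ∀ j, ∑ i, M i j ≤ k) :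
    ∃ σ : Perm ι, ∀ i, M i (σ i) ≠ 0 := by
  obtain ⟨f, hf, hfM⟩ := (all_card_le_biUnion_card_iff_exists_injective _).mp
    (card_le_card_biUnion_support hk hrow hcol)
  exact ⟨.ofBijective f (Finite.injective_iff_bijective.mp hf), fun i => by simpa using hfM i⟩

theorem exists_sum_permMatrix_eq {M : Matrix ι ι ℕ} {k : ℕ}
    (hrow : ∀ i, ∑ j, M i j = k) (hcol : ∀ j, ∑ i, M i j = k) :
    ∃ σ : Fin k → Perm ι, ∑ t, (σ t).permMatrix ℕ = M := by
  induction k generalizing M with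
  | zero =>
    refine ⟨Fin.elim0, ext fun i j => ?_⟩
    simp [sum_eq_zero_iff.mp (hrow i) j (mem_univ j)]
  | succ k ih =>
    obtain ⟨σ, hσ⟩ := exists_perm_forall_ne_zero k.succ_pos hrow (fun j => (hcol j).le)
    set P := σ.permMatrix ℕ
    have hPM : ∀ i j, P i j ≤ M i j := fun i j => by
      by_cases h : σ i = j
      · simpa [P, h, Nat.one_le_iff_ne_zero] using h ▸ hσ i
      · simp [P, h]
    have hM : M = (M - P) + P := ext fun i j => (tsub_add_cancel_of_le (hPM i j)).symm
    have hP : P ∈ doublyStochastic ℕ ι := permMatrix_mem_doublyStochastic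
    obtain ⟨τ, hτ⟩ := ih (M := M - P)
      (fun i => by
        have := hrow i
        rw [hM] at this
        simpa [sum_add_distrib, sum_row_of_mem_doublyStochastic hP] using this)
      (fun j => by
        have := hcol j
        rw [hM] at this
        simpa [sum_add_distrib, sum_col_of_mem_doublyStochastic hP] using this)
    refine ⟨Fin.cons σ τ, ?_⟩
    rw [Fin.sum_univ_succ, Fin.cons_zero]
    simp only [Fin.cons_succ, hτ]
    exact (add_comm _ _).trans hM.symm

end Matrix

theorem stmt_5_general (n k : ℕ) (M : Matrix (Fin n) (Fin n) ℕ)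
    (hrow : ∀ i, ∑ j, M i j = k) (hcol : ∀ j, ∑ i, M i j = k) :
    ∃ σ : Fin k → Equiv.Perm (Fin n),
      ∀ i j, M i j = ∑ t, if (σ t) i = j then 1 else 0 := by
  obtain ⟨σ, hσ⟩ := Matrix.exists_sum_permMatrix_eq hrow hcol
  exact ⟨σ, fun i j => by simp [← hσ, Matrix.sum_apply]⟩

theorem stmt_5 (n k : ℕ) (hk : 1 ≤ k) (M : Matrix (Fin n) (Fin n) ℕ)
    (hrow : ∀ i, ∑ j, M i j = k) (hcol : ∀ j, ∑ i, M i j = k) :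
    ∃ σ : Fin k → Equiv.Perm (Fin n),
      ∀ i j, M i j = ∑ t, if (σ t) i = j then 1 else 0 :=
  stmt_5_general n k M hrow hcol
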